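/- arXiv:2008.01329 — 3 statements merged into one kernel-verified Lean document; each statement's English description precedes it below -/
import Mathlib

section
/- Let T and T' be finite sets with |T| ≥ 2^{n+1} and |T'| ≥ 2^{n+1}. Suppose at round r < n the invariant holds: for every palette π, if |π_T^{p_r}| < 2^{n+1-r} or |π_{T'}^{p_r}| < 2^{n+1-r} then |π_T^{p_r}| = |π_{T'}^{p_r}|. Given any subset T_r ⊆ T, there exists a subset T'_r ⊆ T' such that the invariant holds again at round r+1, i.e. for every palette π, if |π_T^{p_{r+1}}| < 2^{n-r} or |π_{T'}^{p_{r+1}}| < 2^{n-r} then |π_T^{p_{r+1}}| = |π_{T'}^{p_{r+1}}|. -/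
/-- The palette class `π_T^{p_r}`. -/
def paletteClass {T : Type*} (Ts : ℕ → Set T) (r : ℕ) (π : Set ℕ) : Set T :=
  {x | ∀ j < r, (x ∈ Ts j ↔ j ∈ π)}

lemma paletteClass_congr {T : Type*} (Ts : ℕ → Set T) (r : ℕ) {π σ : Set ℕ}
    (h : ∀ j < r, (j ∈ π ↔ j ∈ σ)) : paletteClass Ts r π = paletteClass Ts r σ := by
  ext x
  constructor <;> intro hx j hj
  · exact (hx j hj).trans (h j hj)
  · exact (hx j hj).trans (h j hj).symm

open Classical in
lemma paletteClass_update {T : Type*} (Ts : ℕ → Set T) (r : ℕ) (S : Set T) (π : Set ℕ) :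
    paletteClass (Function.update Ts r S) (r + 1) π =
      if r ∈ π then paletteClass Ts r π ∩ S else paletteClass Ts r π \ S := by
  ext x
  have key : x ∈ paletteClass (Function.update Ts r S) (r + 1) π ↔
      x ∈ paletteClass Ts r π ∧ (x ∈ S ↔ r ∈ π) := by
    constructor
    · intro h
      refine ⟨fun j hj => ?_, ?_⟩
      · have := h j (by omega)
        rwa [Function.update_of_ne (by omega)] at this
      · have := h r (by omega)
        rwa [Function.update_self] at this
    · rintro ⟨h1, h2⟩ j hj
      rcases Nat.lt_succ_iff_lt_or_eq.mp hj with hj' | rfl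
      · rw [Function.update_of_ne (by omega)]; exact h1 j hj'
      · simpa [Function.update_self] using h2
  rw [key]
  by_cases hr : r ∈ π <;> simp [hr, Set.mem_inter_iff, Set.mem_diff]

lemma seurat_arith (B A A1 A' C : ℕ) (hA1 : A1 ≤ A)
    (hC : C = if A1 < B then A1 else if A - A1 < B then A' - (A - A1) else B)
    (hdich : A = A' ∨ (B + B ≤ A ∧ B + B ≤ A')) :
    C ≤ A' ∧ ((A1 < B ∨ C < B) → A1 = C) ∧
      ((A - A1 < B ∨ A' - C < B) → A - A1 = A' - C) := by
  subst hC
  split_ifs <;> omega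

/-- Inductive step for ∃'s winning strategy in the Seurat game for sets: if the
invariant holds at round `r < n` then for any ∀-move `Tr ⊆ T` there is a
response `Tr' ⊆ T'` maintaining the invariant at round `r + 1`. -/
theorem seurat_inductive_step {T T' : Type*} [Finite T] [Finite T'] (n r : ℕ)
    (hr : r < n) (hT : 2 ^ (n + 1) ≤ Nat.card T) (hT' : 2 ^ (n + 1) ≤ Nat.card T')
    (Ts : ℕ → Set T) (Ts' : ℕ → Set T')
    (hinv : ∀ π : Set ℕ, π ⊆ {j | j < n} →
      ((paletteClass Ts r π).ncard < 2 ^ (n + 1 - r) ∨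
       (paletteClass Ts' r π).ncard < 2 ^ (n + 1 - r)) →
      (paletteClass Ts r π).ncard = (paletteClass Ts' r π).ncard) :
    ∀ Tr : Set T, ∃ Tr' : Set T',
      ∀ π : Set ℕ, π ⊆ {j | j < n} →
        ((paletteClass (Function.update Ts r Tr) (r + 1) π).ncard < 2 ^ (n - r) ∨
         (paletteClass (Function.update Ts' r Tr') (r + 1) π).ncard < 2 ^ (n - r)) →
        (paletteClass (Function.update Ts r Tr) (r + 1) π).ncard =
          (paletteClass (Function.update Ts' r Tr') (r + 1) π).ncard := by
  classical
  intro Tr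
  set B := 2 ^ (n - r) with hB
  have hsplit : 2 ^ (n + 1 - r) = B + B := by
    have h1 : n + 1 - r = (n - r) + 1 := by omega
    rw [hB, h1, pow_succ]; ring
  -- data per palette
  set b1 : Set ℕ → ℕ := fun π =>
    if (paletteClass Ts r π ∩ Tr).ncard < B then (paletteClass Ts r π ∩ Tr).ncard
    else if (paletteClass Ts r π).ncard - (paletteClass Ts r π ∩ Tr).ncard < B then
      (paletteClass Ts' r π).ncard -
        ((paletteClass Ts r π).ncard - (paletteClass Ts r π ∩ Tr).ncard)
    else B with hb1
  have hchoice : ∀ π : Set ℕ, ∃ F : Set T', F ⊆ paletteClass Ts' r π ∧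
      F.ncard = min (b1 π) (paletteClass Ts' r π).ncard :=
    fun π => Set.exists_subset_card_eq (min_le_right _ _)
  choose F hFsub hFcard using hchoice
  refine ⟨{x : T' | x ∈ F {j | j < r ∧ x ∈ Ts' j}}, ?_⟩
  set Tr' : Set T' := {x : T' | x ∈ F {j | j < r ∧ x ∈ Ts' j}} with hTr'
  intro π hπ
  set σ : Set ℕ := {j | j < r ∧ j ∈ π} with hσ
  have hσπT : paletteClass Ts r σ = paletteClass Ts r π :=
    paletteClass_congr _ _ (fun j hj => by simp [hσ, hj])
  have hσπT' : paletteClass Ts' r σ = paletteClass Ts' r π :=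
    paletteClass_congr _ _ (fun j hj => by simp [hσ, hj])
  -- the intersection of Tr' with the class of π is F σ
  have hpal : ∀ x : T', x ∈ paletteClass Ts' r π → {j | j < r ∧ x ∈ Ts' j} = σ := by
    intro x hx
    ext j
    simp only [hσ, Set.mem_setOf_eq]
    constructor
    · rintro ⟨hj, hxj⟩; exact ⟨hj, (hx j hj).mp hxj⟩
    · rintro ⟨hj, hjπ⟩; exact ⟨hj, (hx j hj).mpr hjπ⟩
  have hinter : paletteClass Ts' r π ∩ Tr' = F σ := by
    ext x
    constructor
    · rintro ⟨hx1, hx2⟩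
      have := hpal x hx1
      simp only [hTr', Set.mem_setOf_eq] at hx2
      rwa [this] at hx2
    · intro hx
      have hxπ : x ∈ paletteClass Ts' r π := hσπT' ▸ hFsub σ hx
      refine ⟨hxπ, ?_⟩
      simp only [hTr', Set.mem_setOf_eq]
      rw [hpal x hxπ]
      exact hx
  -- abbreviations for cardinalities
  set A := (paletteClass Ts r π).ncard with hA
  set A1 := (paletteClass Ts r π ∩ Tr).ncard with hA1
  set A' := (paletteClass Ts' r π).ncard with hA'
  have hA1le : A1 ≤ A := Set.ncard_le_ncard Set.inter_subset_left (Set.toFinite _)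
  have hdich : A = A' ∨ (B + B ≤ A ∧ B + B ≤ A') := by
    by_cases h : A < B + B ∨ A' < B + B
    · left
      exact hinv π hπ (by rwa [hsplit])
    · right; omega
  have hb1σ : b1 σ = if A1 < B then A1 else if A - A1 < B then A' - (A - A1) else B := by
    simp only [hb1, hσπT, hσπT', hA, hA1, hA']
  obtain ⟨hCle, hg1, hg2⟩ := seurat_arith B A A1 A' (b1 σ) hA1le hb1σ hdich
  have hFcardσ : (F σ).ncard = b1 σ := by
    rw [hFcard σ, hσπT', ← hA', min_eq_left hCle]
  -- cardinalities of the new classes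
  have hnewT : (paletteClass (Function.update Ts r Tr) (r + 1) π).ncard =
      if r ∈ π then A1 else A - A1 := by
    rw [paletteClass_update]
    split_ifs with h
    · rfl
    · rw [← Set.diff_self_inter, Set.ncard_diff Set.inter_subset_left (Set.toFinite _)]
  have hnewT' : (paletteClass (Function.update Ts' r Tr') (r + 1) π).ncard =
      if r ∈ π then b1 σ else A' - b1 σ := by
    rw [paletteClass_update]
    split_ifs with h
    · rw [hinter, hFcardσ]
    · have : paletteClass Ts' r π \ Tr' = paletteClass Ts' r π \ F σ := by
        rw [← hinter, Set.diff_self_inter]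
      rw [this, Set.ncard_diff (hσπT' ▸ hFsub σ) (Set.toFinite _), ← hA', hFcardσ]
  rw [hnewT, hnewT']
  split_ifs with h
  · exact fun hs => hg1 hs
  · exact fun hs => hg2 hs
end

section
/- Define the Seurat game for sets G_n(T,T') as follows: it lasts n rounds; in round i, ∀ chooses a subset of T or of T' and ∃ chooses a subset of the other set; the final position p_n is the resulting sequence of n pairs of subsets; ∃ wins iff for no i ≤ n and palette π ⊆ {0,...,n-1} do we have |π_T^{p_i}| ≠ |π_{T'}^{p_i}| with min(|π_T^{p_i}|, |π_{T'}^{p_i}|) < 2. Theorem: if T and T' are finite sets each of cardinality at least 2^{n+1}, then ∃ has a winning strategy in G_n(T,T'). -/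
/-- Palette class determined by a position (a list of pairs of subsets): on the
`T` side, the elements of `T` whose membership pattern in the first components
agrees with the palette `π`. -/
def paletteClassL {T T' : Type*} (p : List (Set T × Set T')) (π : Set ℕ) : Set T :=
  {x | ∀ j : Fin p.length, (x ∈ (p.get j).1 ↔ (j : ℕ) ∈ π)}

def paletteClassR {T T' : Type*} (p : List (Set T × Set T')) (π : Set ℕ) : Set T' :=
  {x | ∀ j : Fin p.length, (x ∈ (p.get j).2 ↔ (j : ℕ) ∈ π)}

/-- A position is a loss (for ∃) if some palette class has different
cardinalities on the two sides with one of them of size < 2. -/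
def LosingPos {T T' : Type*} (n : ℕ) (p : List (Set T × Set T')) : Prop :=
  ∃ π : Set ℕ, π ⊆ {j | j < n} ∧
    (paletteClassL p π).ncard ≠ (paletteClassR p π).ncard ∧
    min (paletteClassL p π).ncard (paletteClassR p π).ncard < 2

/-- The play of the Seurat game `G_n(T,T')` determined by ∃'s strategy `σ` and
∀'s strategy `f`: in each round ∀ picks a subset of `T` or of `T'` (given the
history), and `σ` completes it to a pair. -/
def play {T T' : Type*}
    (σ : List (Set T × Set T') → (Set T ⊕ Set T') → Set T × Set T')
    (f : List (Set T × Set T') → Set T ⊕ Set T') :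
    ℕ → List (Set T × Set T')
  | 0 => []
  | i + 1 => play σ f i ++ [σ (play σ f i) (f (play σ f i))]

/-!
∃ keeps every palette class the same size on both sides, or of size at least `2^(k+1)` on
both sides, where `k` is the number of rounds still to play. When ∀ cuts a class of sizes
`(c, c')` on one side into pieces of sizes `a₁ + a₂ = c`, ∃ cuts the corresponding class on the
other side into pieces of sizes `t` and `c' - t` with each pair equal or both at least `2^k`;
this is possible because `c = c'` or both are at least `2^(k+1)`. These pieces are the palette
classes of the next position, and at the end the threshold is still at least `2`, so no class
is lost.
-/

open Set

def ThresholdEq (m a b : ℕ) : Prop := a = b ∨ m ≤ a ∧ m ≤ b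

theorem ThresholdEq.symm {m a b : ℕ} (h : ThresholdEq m a b) : ThresholdEq m b a := by
  unfold ThresholdEq at *; omega

theorem ThresholdEq.exists_split {m a₁ a₂ b : ℕ} (h : ThresholdEq (2 * m) (a₁ + a₂) b) :
    ∃ t ≤ b, ThresholdEq m a₁ t ∧ ThresholdEq m a₂ (b - t) := by
  rcases h with h | ⟨hc, hb⟩
  · exact ⟨a₁, by omega, .inl rfl, .inl (by omega)⟩
  by_cases h₁ : a₁ < m
  · exact ⟨a₁, by omega, .inl rfl, .inr ⟨by omega, by omega⟩⟩
  by_cases h₂ : a₂ < m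
  · exact ⟨b - a₂, by omega, .inr ⟨by omega, by omega⟩, .inl (by omega)⟩
  exact ⟨m, by omega, .inr ⟨by omega, le_rfl⟩, .inr ⟨by omega, by omega⟩⟩

theorem exists_subset_thresholdEq_inter_sdiff {α β : Type*} [Finite α] [Finite β] {m : ℕ}
    {C : Set α} {C' : Set β} (h : ThresholdEq (2 * m) C.ncard C'.ncard) (A : Set α) :
    ∃ B ⊆ C', ThresholdEq m (C ∩ A).ncard B.ncard ∧
      ThresholdEq m (C \ A).ncard (C' \ B).ncard := by
  rw [← ncard_inter_add_ncard_sdiff_eq_ncard C A] at h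
  obtain ⟨t, htC', h₁, h₂⟩ := h.exists_split
  obtain ⟨B, hBC', rfl⟩ := exists_subset_card_eq htC'
  exact ⟨B, hBC', h₁, by rwa [ncard_sdiff hBC']⟩

section Palette

variable {α β : Type*}

theorem mem_paletteClassL {p : List (Set α × Set β)} {π : Set ℕ} {x : α} :
    x ∈ paletteClassL p π ↔ ∀ (j : ℕ) (hj : j < p.length), (x ∈ p[j].1 ↔ j ∈ π) := by
  simp [paletteClassL, Fin.forall_iff]

theorem paletteClassR_eq_paletteClassL_map_swap (p : List (Set α × Set β)) (π : Set ℕ) :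
    paletteClassR p π = paletteClassL (p.map Prod.swap) π := by
  ext y
  simp [paletteClassR, mem_paletteClassL, Fin.forall_iff]

theorem paletteClassL_map_swap (p : List (Set α × Set β)) (π : Set ℕ) :
    paletteClassL (p.map Prod.swap) π = paletteClassR p π :=
  (paletteClassR_eq_paletteClassL_map_swap p π).symm

theorem paletteClassR_map_swap (p : List (Set α × Set β)) (π : Set ℕ) :
    paletteClassR (p.map Prod.swap) π = paletteClassL p π := by
  rw [paletteClassR_eq_paletteClassL_map_swap, List.map_map, Prod.swap_swap_eq, List.map_id]

theorem paletteClassL_nil (π : Set ℕ) : paletteClassL ([] : List (Set α × Set β)) π = univ := by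
  ext x
  simp [mem_paletteClassL]

theorem paletteClassR_nil (π : Set ℕ) : paletteClassR ([] : List (Set α × Set β)) π = univ := by
  rw [paletteClassR_eq_paletteClassL_map_swap, List.map_nil, paletteClassL_nil]

theorem paletteClassL_append_singleton (p : List (Set α × Set β)) (x : Set α × Set β)
    (π : Set ℕ) :
    paletteClassL (p ++ [x]) π = paletteClassL p π ∩ {y | y ∈ x.1 ↔ p.length ∈ π} := by
  ext y
  have hlen : (p ++ [x]).length = p.length + 1 := by simp
  simp only [mem_paletteClassL, mem_inter_iff, mem_ofPred_eq, hlen, Nat.forall_lt_succ_right',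
    List.getElem_concat_length]
  refine and_congr_left' (forall₂_congr fun j hj => ?_)
  rw [List.getElem_append_left hj]

theorem paletteClassR_append_singleton (p : List (Set α × Set β)) (x : Set α × Set β)
    (π : Set ℕ) :
    paletteClassR (p ++ [x]) π = paletteClassR p π ∩ {y | y ∈ x.2 ↔ p.length ∈ π} := by
  rw [paletteClassR_eq_paletteClassL_map_swap, List.map_append, List.map_singleton,
    paletteClassL_append_singleton, ← paletteClassR_eq_paletteClassL_map_swap, List.length_map,
    Prod.fst_swap]

theorem paletteClassL_congr (p : List (Set α × Set β)) {π ρ : Set ℕ}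
    (h : ∀ j < p.length, (j ∈ π ↔ j ∈ ρ)) : paletteClassL p π = paletteClassL p ρ := by
  ext x
  simp only [mem_paletteClassL]
  exact forall₂_congr fun j hj => iff_congr Iff.rfl (h j hj)

theorem paletteClassR_congr (p : List (Set α × Set β)) {π ρ : Set ℕ}
    (h : ∀ j < p.length, (j ∈ π ↔ j ∈ ρ)) : paletteClassR p π = paletteClassR p ρ := by
  simp only [paletteClassR_eq_paletteClassL_map_swap]
  exact paletteClassL_congr _ (by simpa using h)

theorem mem_iff_mem_of_mem_paletteClassR {p : List (Set α × Set β)} {π ρ : Set ℕ} {y : β}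
    (hπ : y ∈ paletteClassR p π) (hρ : y ∈ paletteClassR p ρ) :
    ∀ j < p.length, (j ∈ π ↔ j ∈ ρ) := by
  rw [paletteClassR_eq_paletteClassL_map_swap, mem_paletteClassL] at hπ hρ
  intro j hj
  simpa using (hπ j (by simpa using hj)).symm.trans (hρ j (by simpa using hj))

end Palette

def PalettesAgree {α β : Type*} (m : ℕ) (p : List (Set α × Set β)) : Prop :=
  ∀ π, ThresholdEq m (paletteClassL p π).ncard (paletteClassR p π).ncard

namespace PalettesAgree

variable {α β : Type*} {m : ℕ} {p : List (Set α × Set β)}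

theorem nil [Finite α] [Finite β] (hα : m ≤ Nat.card α) (hβ : m ≤ Nat.card β) :
    PalettesAgree m ([] : List (Set α × Set β)) := fun π => by
  rw [paletteClassL_nil, paletteClassR_nil, ncard_univ, ncard_univ]
  exact Or.inr ⟨hα, hβ⟩

theorem map_swap (h : PalettesAgree m p) : PalettesAgree m (p.map Prod.swap) := fun π => by
  rw [paletteClassL_map_swap, paletteClassR_map_swap]
  exact (h π).symm

theorem exists_snd [Finite α] [Finite β] (h : PalettesAgree (2 * m) p) (A : Set α) :
    ∃ B, PalettesAgree m (p ++ [(A, B)]) := by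
  -- Choosing by the pair of classes, not by the palette, makes palettes naming the same class
  -- receive the same answer.
  choose! S hSC' hS using fun (C : Set α) (C' : Set β)
    (hC : ThresholdEq (2 * m) C.ncard C'.ncard) =>
    exists_subset_thresholdEq_inter_sdiff hC A
  set B := ⋃ π, S (paletteClassL p π) (paletteClassR p π)
  have hB : ∀ π, paletteClassR p π ∩ B = S (paletteClassL p π) (paletteClassR p π) := by
    intro π
    refine Subset.antisymm ?_ (subset_inter (hSC' _ _ (h π)) (subset_iUnion_of_subset π le_rfl))
    rintro y ⟨hπ, hyB⟩
    obtain ⟨ρ, hρ⟩ := mem_iUnion.mp hyB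
    have hagree := mem_iff_mem_of_mem_paletteClassR hπ (hSC' _ _ (h ρ) hρ)
    rwa [paletteClassL_congr p hagree, paletteClassR_congr p hagree]
  refine ⟨B, fun π => ?_⟩
  rw [paletteClassL_append_singleton, paletteClassR_append_singleton]
  by_cases hπ : p.length ∈ π
  · simp only [hπ, iff_true, ofPred_mem_eq]
    rw [hB]
    exact (hS _ _ (h π)).1
  · simp only [hπ, iff_false, ← compl_def, ← sdiff_eq]
    rw [← sdiff_self_inter (s := paletteClassR p π), hB]
    exact (hS _ _ (h π)).2

theorem exists_fst [Finite α] [Finite β] (h : PalettesAgree (2 * m) p) (B : Set β) :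
    ∃ A, PalettesAgree m (p ++ [(A, B)]) := by
  obtain ⟨A, hA⟩ := h.map_swap.exists_snd B
  refine ⟨A, ?_⟩
  simpa [List.map_map] using hA.map_swap

theorem not_losingPos (h : PalettesAgree m p) (hm : 2 ≤ m) (n : ℕ) : ¬ LosingPos n p := by
  rintro ⟨π, -, hne, hlt⟩
  rcases h π with heq | ⟨hL, hR⟩ <;> omega

end PalettesAgree

theorem length_play {T T' : Type*} (σ : List (Set T × Set T') → (Set T ⊕ Set T') → Set T × Set T')
    (f : List (Set T × Set T') → Set T ⊕ Set T') (i : ℕ) : (play σ f i).length = i := by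
  induction i with
  | zero => rfl
  | succ i ih => simp [play, ih]

/-- If `T`, `T'` are finite sets with `|T|, |T'| ≥ 2^(n+1)`, then ∃ has a winning
strategy in the `n`-round Seurat game for sets `G_n(T,T')`: a strategy `σ`
(always answering on the opposite side to ∀'s move) such that against any
∀-strategy no position `p_i`, `i ≤ n`, is a loss. -/
theorem exists_winning_strategy_seurat {T T' : Type*} [Finite T] [Finite T']
    (n : ℕ) (hT : 2 ^ (n + 1) ≤ Nat.card T) (hT' : 2 ^ (n + 1) ≤ Nat.card T') :
    ∃ σ : List (Set T × Set T') → (Set T ⊕ Set T') → Set T × Set T',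
      (∀ h A, (σ h (Sum.inl A)).1 = A) ∧
      (∀ h B, (σ h (Sum.inr B)).2 = B) ∧
      ∀ f : List (Set T × Set T') → Set T ⊕ Set T',
        ∀ i ≤ n, ¬ LosingPos n (play σ f i) := by
  choose! answerR hR using fun (p : List (Set T × Set T')) (A : Set T)
    (hp : PalettesAgree (2 * 2 ^ (n - p.length)) p) => hp.exists_snd A
  choose! answerL hL using fun (p : List (Set T × Set T')) (B : Set T')
    (hp : PalettesAgree (2 * 2 ^ (n - p.length)) p) => hp.exists_fst B
  let σ p : (Set T ⊕ Set T') → Set T × Set T' :=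
    Sum.elim (fun A => (A, answerR p A)) (fun B => (answerL p B, B))
  refine ⟨σ, fun _ _ => rfl, fun _ _ => rfl, fun f => ?_⟩
  have hagree : ∀ i ≤ n, PalettesAgree (2 ^ (n + 1 - i)) (play σ f i) := by
    intro i
    induction i with
    | zero => exact fun _ => PalettesAgree.nil hT hT'
    | succ i ih =>
      intro hi
      have hp : PalettesAgree (2 * 2 ^ (n - (play σ f i).length)) (play σ f i) := by
        rw [length_play, ← pow_succ', ← Nat.sub_add_comm (by omega)]
        exact ih (by omega)
      rw [show n + 1 - (i + 1) = n - (play σ f i).length by rw [length_play]; omega]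
      rcases hf : f (play σ f i) with A | B
      · simpa [play, hf, σ] using hR _ A hp
      · simpa [play, hf, σ] using hL _ B hp
  intro i hi
  exact (hagree i hi).not_losingPos (Nat.le_self_pow (by omega) 2) n
end

section
/- For each n ≥ 1 there exists a first-order formula φ_n(x) in the language of boolean algebras with exactly two variables x and y such that in any finite boolean algebra, φ_n(x) holds of an element a if and only if a is above at least n atoms. Consequently, for each k there is a two-variable sentence true exactly in those finite boolean algebras with exactly k atoms. -/
/-- Terms in the language of boolean algebras (0, 1, +, −) over the two
variables `x = var 0`, `y = var 1`. -/
inductive BATerm where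
  | var : Fin 2 → BATerm
  | zero : BATerm
  | one : BATerm
  | sup : BATerm → BATerm → BATerm
  | compl : BATerm → BATerm

def BATerm.eval {α : Type*} [BooleanAlgebra α] (v : Fin 2 → α) : BATerm → α
  | .var i => v i
  | .zero => ⊥
  | .one => ⊤
  | .sup t s => t.eval v ⊔ s.eval v
  | .compl t => (t.eval v)ᶜ

/-- First-order formulas in the language of boolean algebras using only the two
variables `x = var 0` and `y = var 1` (which may be requantified). -/
inductive BAForm where
  | eq : BATerm → BATerm → BAForm
  | not : BAForm → BAForm
  | and : BAForm → BAForm → BAForm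
  | ex : Fin 2 → BAForm → BAForm

def BAForm.Realize {α : Type*} [BooleanAlgebra α] : BAForm → (Fin 2 → α) → Prop
  | .eq t s, v => t.eval v = s.eval v
  | .not f, v => ¬ f.Realize v
  | .and f g, v => f.Realize v ∧ g.Realize v
  | .ex i f, v => ∃ a : α, f.Realize (Function.update v i a)

/-!
Removing an atom `c ≤ a` from `a`, i.e. passing to `a \ c < a`, removes exactly one atom
below it; conversely, every `c < a` misses some atom below `a`, namely any atom below
`a \ c ≠ ⊥`. Hence `a` lies above at least `n + 1` atoms iff some `c < a` lies above at
least `n`, a recursion that two variables can express by alternating their roles.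
-/

section AtomsBelow

variable {α : Type*} [GeneralizedBooleanAlgebra α]

def atomsBelow (a : α) : Set α := {b | IsAtom b ∧ b ≤ a}

lemma atomsBelow_mono : Monotone (atomsBelow (α := α)) :=
  fun _ _ hab _ ⟨hb, hba⟩ => ⟨hb, hba.trans hab⟩

lemma atomsBelow_sdiff_of_isAtom {a c : α} (hc : IsAtom c) :
    atomsBelow (a \ c) = atomsBelow a \ {c} := by
  ext b
  simp only [atomsBelow, Set.mem_sdiff, Set.mem_ofPred_eq, Set.mem_singleton_iff, le_sdiff]
  refine ⟨fun ⟨hb, hba, hbc⟩ => ⟨⟨hb, hba⟩, ?_⟩, fun ⟨⟨hb, hba⟩, hbc⟩ =>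
    ⟨hb, hba, hb.disjoint_of_ne hc hbc⟩⟩
  rintro rfl
  exact hb.1 (disjoint_self.mp hbc)

variable [Finite α]

lemma ncard_atomsBelow_sdiff_add_one {a c : α} (hc : IsAtom c) (hca : c ≤ a) :
    (atomsBelow (a \ c)).ncard + 1 = (atomsBelow a).ncard := by
  rw [atomsBelow_sdiff_of_isAtom hc]
  exact Set.ncard_sdiff_singleton_add_one ⟨hc, hca⟩

lemma succ_le_ncard_atomsBelow_iff {a : α} {n : ℕ} :
    n + 1 ≤ (atomsBelow a).ncard ↔ ∃ c < a, n ≤ (atomsBelow c).ncard := by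
  constructor
  · intro h
    obtain ⟨c, hc, hca⟩ : (atomsBelow a).Nonempty := by
      rw [← Set.ncard_pos]; omega
    refine ⟨a \ c, sdiff_lt hca hc.1, ?_⟩
    have := ncard_atomsBelow_sdiff_add_one hc hca
    omega
  · rintro ⟨c, hca, hn⟩
    obtain ⟨d, hd, hdac⟩ := (eq_bot_or_exists_atom_le (a \ c)).resolve_left
      (sdiff_eq_bot_iff.not.mpr hca.not_ge)
    obtain ⟨hda, hdc⟩ := le_sdiff.mp hdac
    have hc_le : c ≤ a \ d := le_sdiff.mpr ⟨hca.le, hdc.symm⟩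
    have := Set.ncard_le_ncard (atomsBelow_mono hc_le)
    have := ncard_atomsBelow_sdiff_add_one hd hda
    omega

end AtomsBelow

namespace BAForm

variable {α : Type*} [BooleanAlgebra α]

def top : BAForm := .eq .zero .zero

/-- `var i < var j`, with `≤` expressed as `var i + var j = var j`. -/
def lt (i j : Fin 2) : BAForm :=
  .and (.eq (.sup (.var i) (.var j)) (.var j)) (.not (.eq (.var i) (.var j)))

@[simp] lemma realize_top (v : Fin 2 → α) : top.Realize v := rfl

@[simp] lemma realize_lt (i j : Fin 2) (v : Fin 2 → α) : (lt i j).Realize v ↔ v i < v j := by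
  simp only [lt, Realize, BATerm.eval, sup_eq_right, lt_iff_le_and_ne]

/-- Each quantifier binds the variable other than the one currently constrained, so the two
variables swap roles at every step. -/
def atLeastAtoms : ℕ → Fin 2 → BAForm
  | 0, _ => top
  | n + 1, i => .ex (i + 1) (.and (lt (i + 1) i) (atLeastAtoms n (i + 1)))

def atLeastAtomsSentence (n : ℕ) : BAForm :=
  .ex 0 (.and (.eq (.var 0) .one) (atLeastAtoms n 0))

variable [Finite α]

lemma realize_atLeastAtoms (n : ℕ) (i : Fin 2) (v : Fin 2 → α) :
    (atLeastAtoms n i).Realize v ↔ n ≤ (atomsBelow (v i)).ncard := by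
  induction n generalizing i v with
  | zero => simp [atLeastAtoms]
  | succ n ih =>
    have hi : i ≠ i + 1 := by fin_cases i <;> decide
    simp only [atLeastAtoms, Realize, realize_lt, ih, Function.update_self,
      Function.update_of_ne hi, succ_le_ncard_atomsBelow_iff]

lemma realize_atLeastAtomsSentence (n : ℕ) (v : Fin 2 → α) :
    (atLeastAtomsSentence n).Realize v ↔ n ≤ {a : α | IsAtom a}.ncard := by
  have htop : atomsBelow (⊤ : α) = {a | IsAtom a} := by simp [atomsBelow]
  simp [atLeastAtomsSentence, Realize, BATerm.eval, realize_atLeastAtoms, htop]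

end BAForm

/-- For each `n ≥ 1` there is a two-variable formula `φ_n(x)` (free variable
`x = var 0`) holding of an element `a` of any finite boolean algebra iff `a` is
above at least `n` atoms; consequently for each `k` there is a two-variable
sentence true exactly in the finite boolean algebras with exactly `k` atoms. -/
theorem two_variable_atom_counting :
    (∀ n : ℕ, 1 ≤ n → ∃ φ : BAForm,
      ∀ (α : Type) (_ : BooleanAlgebra α) (_ : Fintype α) (v : Fin 2 → α),
        φ.Realize v ↔ n ≤ {a : α | IsAtom a ∧ a ≤ v 0}.ncard) ∧
    (∀ k : ℕ, ∃ ψ : BAForm,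
      ∀ (α : Type) (_ : BooleanAlgebra α) (_ : Fintype α) (v : Fin 2 → α),
        ψ.Realize v ↔ {a : α | IsAtom a}.ncard = k) := by
  refine ⟨fun n _ => ⟨.atLeastAtoms n 0, fun α _ _ v => BAForm.realize_atLeastAtoms n 0 v⟩,
    fun k => ⟨.and (.atLeastAtomsSentence k) (.not (.atLeastAtomsSentence (k + 1))), ?_⟩⟩
  intro α _ _ v
  simp only [BAForm.Realize, BAForm.realize_atLeastAtomsSentence]
  omega
end
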